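/- arXiv:0802.1545 — 9 statements merged into one kernel-verified Lean document; each statement's English description precedes it below -/
import Mathlib

section
/- Let k be an algebraically closed field of characteristic zero and let X and Y be n×n matrices over k satisfying X*Y − Y*X = Y^2. Then the matrix Y is nilpotent. -/
/-! The commutator with `x` acts on polynomials in `y` as `y ^ 2 • d/dy`, so the minimal
polynomial `p` of `y` divides `p' * X ^ 2`. In characteristic zero a root of `p` of multiplicity
`r` is a root of `p'` of multiplicity `r - 1`, hence every root of `p` is a root of `X ^ 2`.
Over an algebraically closed field this forces `p = X ^ m`, i.e. `y ^ m = 0`. -/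

open Polynomial

theorem Polynomial.mul_aeval_sub_aeval_mul {R A : Type*} [CommRing R] [Ring A] [Algebra R A]
    {x y c : A} (hxy : x * y - y * x = c) (hc : Commute y c) (p : R[X]) :
    x * aeval y p - aeval y p * x = aeval y (derivative p) * c := by
  induction p using Polynomial.induction_on with
  | C a => simp [Algebra.commutes]
  | add p q hp hq =>
    simp only [map_add]
    linear_combination (norm := noncomm_ring) hp + hq
  | monomial n a ih =>
    rw [pow_succ, ← mul_assoc]
    generalize C a * X ^ n = q at ih ⊢
    rw [derivative_mul, derivative_X, mul_one, map_add, map_mul, map_mul, aeval_X, add_mul,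
      mul_assoc _ y c, hc.eq]
    linear_combination (norm := noncomm_ring) ih * y + aeval y q * hxy

theorem Polynomial.Monic.eq_X_pow_of_forall_isRoot_eq_zero {K : Type*} [Field K]
    {p : K[X]} (hm : p.Monic) (hs : p.Splits) (h : ∀ a, p.IsRoot a → a = 0) :
    p = X ^ p.roots.card := by
  have hroots : p.roots = Multiset.replicate p.roots.card 0 :=
    Multiset.eq_replicate.mpr ⟨rfl, fun a ha => h a (isRoot_of_mem_roots ha)⟩
  rw [hs.eq_prod_roots_of_monic hm, hroots]
  simp

theorem isNilpotent_of_forall_isRoot_minpoly_eq_zero {K A : Type*} [Field K] [IsAlgClosed K]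
    [Ring A] [Algebra K A] {y : A} (hy : IsIntegral K y)
    (h : ∀ a, (minpoly K y).IsRoot a → a = 0) : IsNilpotent y := by
  have hX := (minpoly.monic hy).eq_X_pow_of_forall_isRoot_eq_zero (IsAlgClosed.splits _) h
  refine ⟨(minpoly K y).roots.card, ?_⟩
  rw [← aeval_X_pow (R := K), ← hX, minpoly.aeval]

theorem isNilpotent_of_mul_sub_mul_eq_sq (K : Type*) {A : Type*} [Field K] [IsAlgClosed K]
    [CharZero K] [Ring A] [Algebra K A] [FiniteDimensional K A] {x y : A}
    (h : x * y - y * x = y ^ 2) :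
    IsNilpotent y := by
  have hy : IsIntegral K y := Algebra.IsIntegral.isIntegral y
  have hdvd : minpoly K y ∣ derivative (minpoly K y) * X ^ 2 := by
    refine minpoly.dvd K y ?_
    rw [map_mul, map_pow, aeval_X, ← mul_aeval_sub_aeval_mul h (Commute.self_pow y 2),
      minpoly.aeval, mul_zero, zero_mul, sub_zero]
  refine isNilpotent_of_forall_isRoot_minpoly_eq_zero hy fun a ha => ?_
  simpa using isRoot_of_isRoot_of_dvd_derivative_mul (minpoly.ne_zero hy) hdvd ha

theorem jordanian_Y_nilpotent_general (k : Type*) [Field k] [IsAlgClosed k] [CharZero k]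
    (n : ℕ) (X Y : Matrix (Fin n) (Fin n) k)
    (h : X * Y - Y * X = Y ^ 2) : IsNilpotent Y :=
  isNilpotent_of_mul_sub_mul_eq_sq k h

/-- Let `k` be an algebraically closed field of characteristic zero and let
`X` and `Y` be `n × n` matrices over `k` satisfying `X*Y - Y*X = Y^2`.
Then the matrix `Y` is nilpotent. -/
theorem jordanian_Y_nilpotent (k : Type*) [Field k] [IsAlgClosed k] [CharZero k]
    (n : ℕ) (hn : 1 ≤ n) (X Y : Matrix (Fin n) (Fin n) k)
    (h : X * Y - Y * X = Y ^ 2) : IsNilpotent Y :=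
  jordanian_Y_nilpotent_general k n X Y h
end

section
/- Let X and Y be n×n matrices over an algebraically closed field k of characteristic zero, and set Z = X*Y − Y*X. If Z commutes with Y (Z*Y = Y*Z), then Z is nilpotent. -/
/-!
Since `Z` commutes with `Y`, so does every power of `Z`, hence
`tr (Z ^ (j + 1)) = tr (X Y Z ^ j) - tr (Y X Z ^ j) = tr (X Y Z ^ j) - tr (X Z ^ j Y) = 0`.
Splitting the space into generalized eigenspaces of `Z`, the trace of `Z ^ m` is
`∑ μ, d μ * μ ^ m` with `d μ` the dimension of the generalized `μ`-eigenspace. Linear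
independence of the characters `m ↦ μ ^ m` then forces `d μ * μ = 0` for every `μ`; in
characteristic zero every eigenvalue is `0`, so `Z` is nilpotent.
-/

open Module LinearMap

theorem Finset.eq_zero_of_forall_sum_mul_pow_eq_zero {R : Type*} [CommRing R] [IsDomain R]
    (s : Finset R) (c : R → R) (h : ∀ j : ℕ, ∑ μ ∈ s, c μ * μ ^ j = 0) :
    ∀ μ ∈ s, c μ = 0 := by
  have hli : LinearIndependent R fun μ : R ↦ ⇑(powersHom R μ) :=
    (linearIndependent_monoidHom (Multiplicative ℕ) R).comp _ (powersHom R).injective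
  refine linearIndependent_iff'.mp hli s c (funext fun j ↦ ?_)
  simpa [Finset.sum_apply] using h j.toAdd

namespace Module.End

variable {K V : Type*} [Field K] [AddCommGroup V] [Module K V] [FiniteDimensional K V]

theorem trace_restrict_maxGenEigenspace_pow (f : End K V) (μ : K) (m : ℕ) :
    trace K _ ((f.restrict (f.mapsTo_maxGenEigenspace_of_comm rfl μ)) ^ m) =
      finrank K (f.maxGenEigenspace μ) * μ ^ m := by
  set g := f.restrict (f.mapsTo_maxGenEigenspace_of_comm rfl μ)
  have hg : IsNilpotent (g - algebraMap K _ μ) := by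
    convert f.isNilpotent_restrict_maxGenEigenspace_sub_algebraMap μ using 1
    ext; rfl
  induction m with
  | zero => simp
  | succ m ih =>
    rw [pow_succ, mul_eq_comp, trace_comp_eq_mul_of_commute_of_isNilpotent μ
      ((Commute.refl g).pow_left m) hg, ih]
    ring

theorem isNilpotent_of_maxGenEigenspace_zero_eq_top (f : End K V)
    (h : f.maxGenEigenspace 0 = ⊤) : IsNilpotent f := by
  refine ⟨maxUnifEigenspaceIndex f 0, ?_⟩
  rw [maxGenEigenspace_eq, genEigenspace_nat] at h
  simpa using h

variable [IsAlgClosed K]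

theorem trace_pow_eq_sum_finrank_maxGenEigenspace_mul_pow (f : End K V) (m : ℕ)
    (s : Finset K) (hs : ∀ μ, f.maxGenEigenspace μ ≠ ⊥ → μ ∈ s) :
    trace K V (f ^ m) = ∑ μ ∈ s, finrank K (f.maxGenEigenspace μ) * μ ^ m := by
  classical
  have hfin : {μ | f.maxGenEigenspace μ ≠ ⊥}.Finite :=
    WellFoundedGT.finite_ne_bot_of_iSupIndep f.independent_maxGenEigenspace
  have hds := DirectSum.isInternal_submodule_of_iSupIndep_of_iSup_eq_top
    f.independent_maxGenEigenspace f.iSup_maxGenEigenspace_eq_top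
  calc trace K V (f ^ m)
      = ∑ μ ∈ hfin.toFinset, finrank K (f.maxGenEigenspace μ) * μ ^ m := by
        rw [trace_eq_sum_trace_restrict' hds hfin fun μ ↦
          f.mapsTo_maxGenEigenspace_of_comm ((Commute.refl f).pow_right m) μ]
        refine Finset.sum_congr rfl fun μ _ ↦ ?_
        rw [← pow_restrict _ (f.mapsTo_maxGenEigenspace_of_comm rfl μ),
          trace_restrict_maxGenEigenspace_pow]
    _ = ∑ μ ∈ s, finrank K (f.maxGenEigenspace μ) * μ ^ m :=
        Finset.sum_subset (fun μ hμ ↦ hs μ (by simpa using hμ)) fun μ _ hμ ↦ by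
          rw [Set.Finite.mem_toFinset, Set.mem_ofPred_eq, not_not] at hμ
          rw [Submodule.finrank_eq_zero.mpr hμ, Nat.cast_zero, zero_mul]

theorem isNilpotent_of_forall_trace_pow_eq_zero [CharZero K] (f : End K V)
    (h : ∀ m, 0 < m → trace K V (f ^ m) = 0) : IsNilpotent f := by
  have hfin : {μ | f.maxGenEigenspace μ ≠ ⊥}.Finite :=
    WellFoundedGT.finite_ne_bot_of_iSupIndep f.independent_maxGenEigenspace
  have hs : ∀ μ, f.maxGenEigenspace μ ≠ ⊥ → μ ∈ hfin.toFinset := by simp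
  have hcoeff := Finset.eq_zero_of_forall_sum_mul_pow_eq_zero hfin.toFinset
    (fun μ ↦ finrank K (f.maxGenEigenspace μ) * μ) fun j ↦ by
      have := h (j + 1) j.succ_pos
      rw [trace_pow_eq_sum_finrank_maxGenEigenspace_mul_pow f _ _ hs] at this
      simpa only [pow_succ', mul_assoc] using this
  have hbot : ∀ μ ≠ 0, f.maxGenEigenspace μ = ⊥ := fun μ hμ ↦ by
    by_contra hne
    simpa [hμ, hne] using hcoeff μ (hs μ hne)
  apply isNilpotent_of_maxGenEigenspace_zero_eq_top
  rw [eq_top_iff, ← f.iSup_maxGenEigenspace_eq_top, iSup_le_iff]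
  intro μ
  rcases eq_or_ne μ 0 with rfl | hμ
  · exact le_rfl
  · simp [hbot μ hμ]

end Module.End

theorem Matrix.trace_commutator_mul_eq_zero {n R : Type*} [Fintype n] [CommRing R]
    (X Y C : Matrix n n R) (h : Commute Y C) : trace ((X * Y - Y * X) * C) = 0 := by
  rw [sub_mul, trace_sub, sub_eq_zero, Matrix.mul_assoc, h.eq, ← Matrix.mul_assoc, trace_mul_comm,
    Matrix.mul_assoc]

theorem Matrix.isNilpotent_of_forall_trace_pow_eq_zero {n K : Type*} [Fintype n] [DecidableEq n]
    [Field K] [IsAlgClosed K] [CharZero K] (A : Matrix n n K)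
    (h : ∀ m, 0 < m → trace (A ^ m) = 0) : IsNilpotent A := by
  rw [← IsNilpotent.map_iff (toLinAlgEquiv' (R := K) (n := n)).injective]
  refine Module.End.isNilpotent_of_forall_trace_pow_eq_zero _ fun m hm ↦ ?_
  rw [← map_pow]
  exact (trace_toLin'_eq _).trans (h m hm)

theorem commutator_commuting_with_Y_nilpotent_general (k : Type*) [Field k] [IsAlgClosed k] [CharZero k]
    (n : ℕ) (X Y : Matrix (Fin n) (Fin n) k)
    (Z : Matrix (Fin n) (Fin n) k) (hZ : Z = X * Y - Y * X)
    (hcomm : Z * Y = Y * Z) : IsNilpotent Z := by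
  subst hZ
  refine Matrix.isNilpotent_of_forall_trace_pow_eq_zero _ fun m hm ↦ ?_
  obtain ⟨j, rfl⟩ := Nat.exists_eq_add_one_of_ne_zero hm.ne'
  rw [pow_succ']
  exact Matrix.trace_commutator_mul_eq_zero X Y _ (Commute.pow_left hcomm j).symm

/-- Let `X` and `Y` be `n × n` matrices over an algebraically closed field `k`
of characteristic zero, and set `Z = X*Y - Y*X`. If `Z` commutes with `Y` (`Z*Y = Y*Z`),
then `Z` is nilpotent. -/
theorem commutator_commuting_with_Y_nilpotent (k : Type*) [Field k] [IsAlgClosed k] [CharZero k]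
    (n : ℕ) (hn : 1 ≤ n) (X Y : Matrix (Fin n) (Fin n) k)
    (Z : Matrix (Fin n) (Fin n) k) (hZ : Z = X * Y - Y * X)
    (hcomm : Z * Y = Y * Z) : IsNilpotent Z :=
  commutator_commuting_with_Y_nilpotent_general k n X Y Z hZ hcomm
end

section
/- Let k be an algebraically closed field of characteristic zero, let X and Y be n×n matrices over k satisfying X*Y − Y*X = Y^2, and let A = Algebra.adjoin k {X, Y} be the unital k-subalgebra of n×n matrices generated by X and Y. Then an element a of A lies in the Jacobson radical of A if and only if a is nilpotent. -/
/-!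
A finite-dimensional algebra is Artinian, so its Jacobson radical is a nilpotent ideal.
Conversely, let `S` be a simple module. Since `y x = (x - y) y`, the kernel of `y` on `S` is a
submodule, so `y` acts injectively or by zero. An invertible `y` would give `[y⁻¹, x] = 1`, which
is impossible in characteristic zero by taking traces. So `y` kills `S`, the image of the algebra
in `End S` is generated by `x` alone and hence commutative, and then the kernel of a nilpotent
element is a nonzero submodule, i.e. all of `S`.
-/

open Module

theorem Units.inv_mul_sub_mul_inv_eq_one {R : Type*} [Ring R] {x : R} {u : Rˣ}
    (h : x * u - u * x = u ^ 2) : ↑u⁻¹ * x - x * ↑u⁻¹ = 1 :=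
  calc ↑u⁻¹ * x - x * ↑u⁻¹ = ↑u⁻¹ * (x * u - u * x) * ↑u⁻¹ := by
        simp only [mul_sub, sub_mul, mul_assoc, Units.mul_inv, mul_one, Units.inv_mul_cancel_left]
    _ = 1 := by simp [h, sq]

theorem Module.End.not_isUnit_of_mul_sub_mul_eq_sq {k V : Type*} [Field k] [CharZero k]
    [AddCommGroup V] [Module k V] [FiniteDimensional k V] [Nontrivial V] {f g : End k V}
    (h : f * g - g * f = g ^ 2) : ¬ IsUnit g := by
  rintro ⟨u, rfl⟩
  have htrace := congrArg (LinearMap.trace k V) (Units.inv_mul_sub_mul_inv_eq_one h)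
  rw [map_sub, LinearMap.trace_mul_comm, sub_self, LinearMap.trace_one] at htrace
  exact Module.finrank_pos.ne' (by exact_mod_cast htrace.symm)

section SimpleModule

variable {k B S : Type*} [Field k] [Ring B] [Algebra k B]
  [AddCommGroup S] [Module k S] [Module B S] [IsScalarTower k B S] {s : Set B}

theorem Submodule.smul_mem_of_adjoin_eq_top (hs : Algebra.adjoin k s = ⊤) {W : Submodule k S}
    (hW : ∀ b ∈ s, ∀ v ∈ W, b • v ∈ W) (b : B) {v : S} (hv : v ∈ W) : b • v ∈ W := by
  induction hs ▸ Algebra.mem_top (x := b) using Algebra.adjoin_induction generalizing v with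
  | mem b hb => exact hW b hb v hv
  | algebraMap r => simpa only [algebraMap_smul] using W.smul_mem r hv
  | add b c _ _ hb hc => simpa only [add_smul] using W.add_mem (hb hv) (hc hv)
  | mul b c _ _ hb hc => simpa only [mul_smul] using hb (hc hv)

theorem Submodule.eq_bot_or_eq_top_of_adjoin_eq_top [IsSimpleModule B S]
    (hs : Algebra.adjoin k s = ⊤) {W : Submodule k S} (hW : ∀ b ∈ s, ∀ v ∈ W, b • v ∈ W) :
    W = ⊥ ∨ W = ⊤ := by
  let W' : Submodule B S :=
    { W.toAddSubmonoid with smul_mem' := fun b _ hv ↦ W.smul_mem_of_adjoin_eq_top hs hW b hv }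
  have hW' : W'.restrictScalars k = W := rfl
  rcases eq_bot_or_eq_top W' with h | h
  · exact .inl (by rw [← hW', h, Submodule.restrictScalars_bot])
  · exact .inr (by rw [← hW', h, Submodule.restrictScalars_top])

theorem Algebra.lsmul_eq_zero_of_not_isUnit [IsSimpleModule B S] [FiniteDimensional k S]
    (hs : Algebra.adjoin k s = ⊤) {z : B} (hz : ¬ IsUnit (Algebra.lsmul k k S z))
    (hker : ∀ b ∈ s, ∀ v : S, z • v = 0 → z • b • v = 0) : Algebra.lsmul k k S z = 0 := by
  rcases Submodule.eq_bot_or_eq_top_of_adjoin_eq_top hs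
      (W := LinearMap.ker (Algebra.lsmul k k S z)) hker with h | h
  · exact absurd ((LinearMap.isUnit_iff_ker_eq_bot _).mpr h) hz
  · exact LinearMap.ker_eq_top.mp h

variable [CharZero k] [IsSimpleModule B S] [FiniteDimensional k S] {x y : B}
  (hgen : Algebra.adjoin k {x, y} = ⊤) (hxy : x * y - y * x = y ^ 2)
include hgen hxy

theorem lsmul_eq_zero_of_mul_sub_mul_eq_sq : Algebra.lsmul k k S y = 0 := by
  have : Nontrivial S := IsSimpleModule.nontrivial B S
  refine Algebra.lsmul_eq_zero_of_not_isUnit hgen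
    (End.not_isUnit_of_mul_sub_mul_eq_sq (by simpa using congrArg (Algebra.lsmul k k S) hxy)) ?_
  have hyx : y * x = (x - y) * y := by rw [sub_mul, ← sq, ← hxy, sub_sub_cancel]
  rintro b (rfl | rfl) v hv
  · rw [← mul_smul, hyx, mul_smul, hv, smul_zero]
  · rw [hv, smul_zero]

theorem lsmul_eq_zero_of_isNilpotent {a : B} (ha : IsNilpotent a) : Algebra.lsmul k k S a = 0 := by
  have : Nontrivial S := IsSimpleModule.nontrivial B S
  set ρ : B →ₐ[k] End k S := Algebra.lsmul k k S
  have hy : ρ y = 0 := lsmul_eq_zero_of_mul_sub_mul_eq_sq hgen hxy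
  have hcomm : ρ x * ρ a = ρ a * ρ x := by
    have : Algebra.adjoin k {x, y} ≤ (Subalgebra.centralizer k {ρ x}).comap ρ := by
      rw [Algebra.adjoin_le_iff]
      rintro b (rfl | rfl) _ rfl
      · rfl
      · simp [hy]
    exact (Subalgebra.mem_centralizer_iff k).mp (this (hgen ▸ Algebra.mem_top)) _ rfl
  refine Algebra.lsmul_eq_zero_of_not_isUnit hgen (ha.map ρ).not_isUnit ?_
  rintro b (hb | hb) v hv
  · have hxa : x • a • v = a • x • v := LinearMap.congr_fun hcomm v
    rw [hb, ← hxa, hv, smul_zero]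
  · have hyv : y • v = 0 := LinearMap.congr_fun hy v
    rw [Set.mem_singleton_iff.mp hb, hyv, smul_zero]

end SimpleModule

theorem isNilpotent_of_mem_jacobson_bot {R : Type*} [Ring R] [IsArtinianRing R] {a : R}
    (ha : a ∈ Ideal.jacobson (⊥ : Ideal R)) : IsNilpotent a := by
  obtain ⟨m, hm⟩ := IsArtinianRing.isNilpotent_jacobson_bot (R := R)
  exact ⟨m, by simpa [hm] using Submodule.pow_mem_pow _ ha m⟩

section Jacobson

variable {k B : Type*} [Field k] [CharZero k] [Ring B] [Algebra k B] [FiniteDimensional k B]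
  {x y : B} (hgen : Algebra.adjoin k {x, y} = ⊤) (hxy : x * y - y * x = y ^ 2)
include hgen hxy

theorem mem_jacobson_bot_of_isNilpotent {a : B} (ha : IsNilpotent a) :
    a ∈ Ideal.jacobson (⊥ : Ideal B) := by
  rw [Ideal.jacobson_bot, Ring.jacobson_eq_sInf_isMaximal]
  refine Submodule.mem_sInf.mpr fun M hM ↦ ?_
  have : IsSimpleModule B (B ⧸ M) := isSimpleModule_iff_isCoatom.mpr (Ideal.isMaximal_def.mp hM)
  have hzero : a • (Submodule.Quotient.mk 1 : B ⧸ M) = 0 :=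
    LinearMap.congr_fun (lsmul_eq_zero_of_isNilpotent hgen hxy ha) _
  rwa [← Submodule.Quotient.mk_smul, smul_eq_mul, mul_one, Submodule.Quotient.mk_eq_zero] at hzero

theorem mem_jacobson_bot_iff_isNilpotent {a : B} :
    a ∈ Ideal.jacobson (⊥ : Ideal B) ↔ IsNilpotent a :=
  have : IsArtinianRing B := .of_finite k B
  ⟨isNilpotent_of_mem_jacobson_bot, mem_jacobson_bot_of_isNilpotent hgen hxy⟩

end Jacobson

theorem jordanian_image_jacobson_radical_eq_nilpotents_general
    (k : Type*) [Field k] [CharZero k]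
    (n : ℕ) (X Y : Matrix (Fin n) (Fin n) k)
    (h : X * Y - Y * X = Y ^ 2)
    (A : Subalgebra k (Matrix (Fin n) (Fin n) k)) (hA : A = Algebra.adjoin k {X, Y})
    (a : A) : a ∈ Ideal.jacobson (⊥ : Ideal A) ↔ IsNilpotent a := by
  subst hA
  let x : Algebra.adjoin k {X, Y} := ⟨X, Algebra.subset_adjoin (by simp)⟩
  let y : Algebra.adjoin k {X, Y} := ⟨Y, Algebra.subset_adjoin (by simp)⟩
  have hgen : Algebra.adjoin k {x, y} = ⊤ := by
    rw [← Algebra.adjoin_adjoin_coe_preimage]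
    congr
    ext
    simp [x, y, Subtype.ext_iff]
  exact mem_jacobson_bot_iff_isNilpotent hgen (Subtype.ext h)

/-- Let `k` be an algebraically closed field of characteristic zero, let `X` and
`Y` be `n × n` matrices over `k` satisfying `X*Y - Y*X = Y^2`, and let
`A = Algebra.adjoin k {X, Y}` be the unital `k`-subalgebra of `n × n` matrices generated by `X`
and `Y`. Then an element `a` of `A` lies in the Jacobson radical of `A` (the intersection of its
maximal left ideals, i.e. `Ideal.jacobson ⊥`) if and only if `a` is nilpotent. -/
theorem jordanian_image_jacobson_radical_eq_nilpotents
    (k : Type*) [Field k] [IsAlgClosed k] [CharZero k]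
    (n : ℕ) (hn : 1 ≤ n) (X Y : Matrix (Fin n) (Fin n) k)
    (h : X * Y - Y * X = Y ^ 2)
    (A : Subalgebra k (Matrix (Fin n) (Fin n) k)) (hA : A = Algebra.adjoin k {X, Y})
    (a : A) : a ∈ Ideal.jacobson (⊥ : Ideal A) ↔ IsNilpotent a :=
  jordanian_image_jacobson_radical_eq_nilpotents_general k n X Y h A hA a
end

section
/- Let k be a field and let R = k⟨x,y⟩/(xy − yx − y²) be the Jordanian algebra. Then the family of monomials indexed by ℕ×ℕ sending (i, j) to y^i * x^j is a basis of R as a k-vector space: it is linearly independent over k and its k-linear span is all of R. -/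
/-- The defining relation `x*y = y*x + y*y` of the Jordanian algebra
`R = k⟨x,y⟩/(xy - yx - y²)`, as a relation on the free algebra on two generators. -/
inductive JordanRel (k : Type) [Field k] :
    FreeAlgebra k (Fin 2) → FreeAlgebra k (Fin 2) → Prop
  | rel : JordanRel k (FreeAlgebra.ι k 0 * FreeAlgebra.ι k 1)
      (FreeAlgebra.ι k 1 * FreeAlgebra.ι k 0 + FreeAlgebra.ι k 1 * FreeAlgebra.ι k 1)

/-- The Jordanian algebra `R = k⟨x,y⟩/(xy - yx - y²)`. -/
abbrev Jordanian (k : Type) [Field k] := RingQuot (JordanRel k)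

/-- The image of the generator `x` in the Jordanian algebra. -/
noncomputable def Jordanian.x (k : Type) [Field k] : Jordanian k :=
  RingQuot.mkAlgHom k (JordanRel k) (FreeAlgebra.ι k 0)

/-- The image of the generator `y` in the Jordanian algebra. -/
noncomputable def Jordanian.y (k : Type) [Field k] : Jordanian k :=
  RingQuot.mkAlgHom k (JordanRel k) (FreeAlgebra.ι k 1)

/-!
The span of the monomials `y^i x^j` contains `1` and is stable under left multiplication by `y`
and by `x`, because `x y^i = y^i x + i y^(i+1)`; as `x` and `y` generate `R`, it is all of `R`.
For independence, the same formulas define an action of `R` on the vector space with basis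
`e (i, j)`: `y` sends `e (i, j)` to `e (i+1, j)` and `x` sends it to `e (i, j+1) + i e (i+1, j)`.
The defining relation holds for these operators, and `y^i x^j` sends `e (0, 0)` to `e (i, j)`.
-/

theorem Submodule.span_range_eq_top_of_mul_mem {R A ι : Type*} [CommSemiring R] [Semiring A]
    [Algebra R A] {s : Set A} (hs : Algebra.adjoin R s = ⊤) {v : ι → A}
    (one_mem : (1 : A) ∈ span R (Set.range v))
    (mul_mem : ∀ a ∈ s, ∀ i, a * v i ∈ span R (Set.range v)) :
    span R (Set.range v) = ⊤ := by
  set S := span R (Set.range v)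
  have mul_mem_of_mem_adjoin {b : A} (hb : b ∈ Algebra.adjoin R s) : ∀ m ∈ S, b * m ∈ S := by
    induction hb using Algebra.adjoin_induction with
    | mem a ha =>
      have : S ≤ S.comap (LinearMap.mulLeft R a) :=
        span_le.2 (Set.range_subset_iff.2 (mul_mem a ha))
      exact fun m hm ↦ this hm
    | algebraMap r => exact fun m hm ↦ by simpa [Algebra.smul_def] using S.smul_mem r hm
    | add a b _ _ ha hb => exact fun m hm ↦ by simpa [add_mul] using S.add_mem (ha m hm) (hb m hm)
    | mul a b _ _ ha hb => exact fun m hm ↦ by simpa [mul_assoc] using ha _ (hb m hm)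
  refine eq_top_iff.2 fun b _ ↦ ?_
  simpa using mul_mem_of_mem_adjoin (hs ▸ Algebra.mem_top : b ∈ Algebra.adjoin R s) 1 one_mem

namespace Jordanian

variable (k : Type) [Field k]

theorem x_mul_y : x k * y k = y k * x k + y k * y k := by
  simp only [x, y, ← map_mul, ← map_add]
  exact RingQuot.mkAlgHom_rel k JordanRel.rel

theorem x_mul_y_pow (i : ℕ) : x k * y k ^ i = y k ^ i * x k + i • y k ^ (i + 1) := by
  induction i with
  | zero => simp
  | succ n ih =>
    calc x k * y k ^ (n + 1)
        = y k ^ n * (x k * y k) + n • y k ^ (n + 2) := by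
          rw [pow_succ, ← mul_assoc, ih, add_mul, mul_assoc, smul_mul_assoc, ← pow_succ]
      _ = y k ^ (n + 1) * x k + (n + 1) • y k ^ (n + 2) := by
          rw [x_mul_y, mul_add, ← mul_assoc, ← pow_succ, ← mul_assoc, ← pow_succ, ← pow_succ,
            succ_nsmul]
          abel

theorem adjoin_x_y : Algebra.adjoin k {x k, y k} = ⊤ := by
  have : {x k, y k} = RingQuot.mkAlgHom k (JordanRel k) '' Set.range (FreeAlgebra.ι k) := by
    ext
    simp [x, y, Fin.exists_fin_two, eq_comm]
  rw [this, Algebra.adjoin_image, FreeAlgebra.adjoin_range_ι, Algebra.map_top,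
    AlgHom.range_eq_top]
  exact RingQuot.mkAlgHom_surjective k _

noncomputable def monomial (p : ℕ × ℕ) : Jordanian k := y k ^ p.1 * x k ^ p.2

theorem monomial_zero : monomial k 0 = 1 := by simp [monomial]

theorem y_mul_monomial (p : ℕ × ℕ) : y k * monomial k p = monomial k (p.1 + 1, p.2) := by
  rw [monomial, monomial, ← mul_assoc, ← pow_succ']

theorem x_mul_monomial (p : ℕ × ℕ) :
    x k * monomial k p = monomial k (p.1, p.2 + 1) + (p.1 : k) • monomial k (p.1 + 1, p.2) := by
  rw [monomial, monomial, monomial, ← mul_assoc, x_mul_y_pow, add_mul, mul_assoc, ← pow_succ',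
    smul_mul_assoc, Nat.cast_smul_eq_nsmul]

theorem span_range_monomial : Submodule.span k (Set.range (monomial k)) = ⊤ := by
  refine Submodule.span_range_eq_top_of_mul_mem (adjoin_x_y k)
    (Submodule.subset_span ⟨0, monomial_zero k⟩) ?_
  have mem (p : ℕ × ℕ) : monomial k p ∈ Submodule.span k (Set.range (monomial k)) :=
    Submodule.subset_span ⟨p, rfl⟩
  rintro a (rfl | rfl) p
  · rw [x_mul_monomial]
    exact Submodule.add_mem _ (mem _) (Submodule.smul_mem _ _ (mem _))
  · rw [y_mul_monomial]
    exact mem _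

noncomputable def modelY : Module.End k ((ℕ × ℕ) →₀ k) :=
  Finsupp.lift _ k (ℕ × ℕ) fun p ↦ Finsupp.single (p.1 + 1, p.2) 1

noncomputable def modelX : Module.End k ((ℕ × ℕ) →₀ k) :=
  Finsupp.lift _ k (ℕ × ℕ) fun p ↦
    Finsupp.single (p.1, p.2 + 1) 1 + (p.1 : k) • Finsupp.single (p.1 + 1, p.2) 1

theorem modelY_single (p : ℕ × ℕ) (c : k) :
    modelY k (Finsupp.single p c) = Finsupp.single (p.1 + 1, p.2) c := by
  simp [modelY, Finsupp.smul_single]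

theorem modelX_single (p : ℕ × ℕ) (c : k) :
    modelX k (Finsupp.single p c) =
      Finsupp.single (p.1, p.2 + 1) c + (p.1 : k) • Finsupp.single (p.1 + 1, p.2) c := by
  simp [modelX, Finsupp.smul_single, mul_comm]

theorem modelX_mul_modelY : modelX k * modelY k = modelY k * modelX k + modelY k * modelY k := by
  refine Finsupp.lhom_ext fun p c ↦ ?_
  simp only [Module.End.mul_apply, LinearMap.add_apply, modelY_single, modelX_single, map_add,
    map_smul, Nat.cast_add, Nat.cast_one, add_smul, one_smul]
  abel

noncomputable def toEnd : Jordanian k →ₐ[k] Module.End k ((ℕ × ℕ) →₀ k) :=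
  RingQuot.liftAlgHom k ⟨FreeAlgebra.lift k ![modelX k, modelY k], by
    rintro _ _ ⟨⟩
    simpa using modelX_mul_modelY k⟩

theorem toEnd_x : toEnd k (x k) = modelX k := by
  simp [toEnd, x]

theorem toEnd_y : toEnd k (y k) = modelY k := by
  simp [toEnd, y]

theorem modelX_pow_single_zero (j : ℕ) :
    (modelX k ^ j) (Finsupp.single 0 1) = Finsupp.single (0, j) 1 := by
  induction j with
  | zero => rfl
  | succ n ih => simp [pow_succ', ih, modelX_single]

theorem modelY_pow_single (i : ℕ) (p : ℕ × ℕ) :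
    (modelY k ^ i) (Finsupp.single p 1) = Finsupp.single (p.1 + i, p.2) 1 := by
  induction i with
  | zero => rfl
  | succ n ih => rw [pow_succ', Module.End.mul_apply, ih, modelY_single, add_assoc]

theorem toEnd_monomial_single_zero (p : ℕ × ℕ) :
    toEnd k (monomial k p) (Finsupp.single 0 1) = Finsupp.single p 1 := by
  rw [monomial, map_mul, map_pow, map_pow, toEnd_x, toEnd_y, Module.End.mul_apply,
    modelX_pow_single_zero, modelY_pow_single, zero_add]

theorem linearIndependent_monomial : LinearIndependent k (monomial k) := by
  let F := (LinearMap.applyₗ (Finsupp.single 0 1)).comp (toEnd k).toLinearMap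
  refine LinearIndependent.of_comp F ?_
  convert Finsupp.linearIndependent_single_one k (ℕ × ℕ) using 1
  exact funext (toEnd_monomial_single_zero k)

end Jordanian

/-- Let `k` be a field and let `R = k⟨x,y⟩/(xy - yx - y²)` be the Jordanian
algebra. Then the family of monomials indexed by `ℕ × ℕ` sending `(i, j)` to `y^i * x^j` is a
basis of `R` as a `k`-vector space: it is linearly independent over `k` and its `k`-linear span
is all of `R`. -/
theorem jordanian_monomial_basis (k : Type) [Field k] :
    LinearIndependent k (fun p : ℕ × ℕ => Jordanian.y k ^ p.1 * Jordanian.x k ^ p.2) ∧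
    Submodule.span k
      (Set.range fun p : ℕ × ℕ => Jordanian.y k ^ p.1 * Jordanian.x k ^ p.2) = ⊤ :=
  ⟨Jordanian.linearIndependent_monomial k, Jordanian.span_range_monomial k⟩
end

section
/- Let k be a field and n ≥ 1. A matrix X ∈ M_n(k) satisfies X*J_n − J_n*X = J_n^2 if and only if there exists a polynomial p ∈ k[t] such that X = X⁰ + p(J_n), where p(J_n) denotes the evaluation of p at the matrix J_n. (This describes all n-dimensional representations of the Jordanian algebra in which y acts by a single full Jordan block.) -/
/-- The `n × n` nilpotent Jordan block with ones on the subdiagonal: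
`(J_n)_{i,j} = 1` iff `i = j + 1`. -/
def jordanBlock (k : Type*) [Field k] (n : ℕ) : Matrix (Fin n) (Fin n) k :=
  Matrix.of fun i j => if (i : ℕ) = (j : ℕ) + 1 then 1 else 0

/-- The matrix `X⁰` whose only nonzero entries are `(X⁰)_{j+1,j} = j` for `j = 0,…,n-2`. -/
def Xzero (k : Type*) [Field k] (n : ℕ) : Matrix (Fin n) (Fin n) k :=
  Matrix.of fun i j => if (i : ℕ) = (j : ℕ) + 1 then ((j : ℕ) : k) else 0

/-!
`X⁰` is a particular solution, so `X` is a solution iff `X - X⁰` commutes with `J_n`. Since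
`J_nᵐ e₀ = e_m`, the vector `e₀` is cyclic for `J_n`; a matrix `Y` commuting with `J_n` is then
determined by `Y e₀`, which is `p(J_n) e₀` for some polynomial `p`, so `Y = p(J_n)`.
-/

open Polynomial Submodule Matrix

theorem Module.End.exists_eq_aeval_of_commute {R M : Type*} [CommRing R] [AddCommGroup M]
    [Module R M] {f g : Module.End R M} (v : M)
    (hv : span R (Set.range fun m : ℕ => (f ^ m) v) = ⊤) (hfg : Commute f g) :
    ∃ p : R[X], g = aeval f p := by
  obtain ⟨p, hp⟩ : g v ∈ LinearMap.range ((LinearMap.applyₗ v).comp (aeval f).toLinearMap) := by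
    refine span_le.2 ?_ (hv ▸ mem_top)
    rintro _ ⟨m, rfl⟩
    exact ⟨X ^ m, by simp⟩
  have hfp : Commute f (aeval f p) := by simpa using (Commute.all X p).map (aeval f)
  refine ⟨p, LinearMap.ext_on_range hv fun m => ?_⟩
  calc g ((f ^ m) v) = (f ^ m) (g v) := by rw [← Module.End.mul_apply, ← (hfg.pow_left m).eq]; rfl
    _ = (f ^ m) (aeval f p v) := by rw [← hp]; rfl
    _ = aeval f p ((f ^ m) v) := by rw [← Module.End.mul_apply, (hfp.pow_left m).eq]; rfl

theorem Matrix.exists_eq_aeval_of_commute {R ι : Type*} [CommRing R] [Fintype ι]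
    [DecidableEq ι] {A B : Matrix ι ι R} (v : ι → R)
    (hv : span R (Set.range fun m : ℕ => (A ^ m) *ᵥ v) = ⊤) (hAB : Commute A B) :
    ∃ p : R[X], B = aeval A p := by
  obtain ⟨p, hp⟩ := Module.End.exists_eq_aeval_of_commute (f := toLinAlgEquiv' A)
    (g := toLinAlgEquiv' B) v (by simpa [← map_pow, toLinAlgEquiv'_apply] using hv) (hAB.map _)
  exact ⟨p, toLinAlgEquiv'.injective (by rw [hp, aeval_algEquiv]; rfl)⟩

section Subdiagonal

variable {R : Type*} [Semiring R] {n : ℕ}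

def subdiagonal (c : ℕ → R) : Matrix (Fin n) (Fin n) R :=
  of fun i j => if (i : ℕ) = (j : ℕ) + 1 then c j else 0

variable (R n) in
/-- The standard basis vector `e_m` of `Fin n → R`, indexed by `m : ℕ` so that it is `0` for
`m ≥ n`; subdiagonal matrices then shift `e_m` to `e_{m+1}` with no bounds to check. -/
def natSingle (m : ℕ) : Fin n → R :=
  fun i => if (i : ℕ) = m then 1 else 0

theorem natSingle_val (j : Fin n) : natSingle R n j = Pi.single j 1 := by
  ext i
  simp [natSingle, Pi.single_apply, Fin.ext_iff]

theorem natSingle_of_le {m : ℕ} (hm : n ≤ m) : natSingle R n m = 0 := by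
  ext i
  simp [natSingle, (i.isLt.trans_le hm).ne]

theorem span_range_natSingle : span R (Set.range (natSingle R n)) = ⊤ := by
  refine eq_top_iff.2 ((Pi.basisFun R (Fin n)).span_eq ▸ span_mono ?_)
  rintro _ ⟨j, rfl⟩
  exact ⟨j, by simp [natSingle_val]⟩

theorem subdiagonal_mulVec_natSingle (c : ℕ → R) (m : ℕ) :
    subdiagonal c *ᵥ natSingle R n m = c m • natSingle R n (m + 1) := by
  obtain hm | hm := lt_or_ge m n
  · rw [show m = ((⟨m, hm⟩ : Fin n) : ℕ) from rfl, natSingle_val, mulVec_single_one]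
    ext i
    simp [subdiagonal, natSingle]
  · simp [natSingle_of_le hm, natSingle_of_le (hm.trans m.le_succ)]

end Subdiagonal

section JordanBlock

variable {k : Type*} [Field k] {n : ℕ}

theorem jordanBlock_eq_subdiagonal : jordanBlock k n = subdiagonal fun _ => 1 := rfl

theorem Xzero_eq_subdiagonal : Xzero k n = subdiagonal Nat.cast := rfl

theorem jordanBlock_pow_mulVec_natSingle (j m : ℕ) :
    jordanBlock k n ^ m *ᵥ natSingle k n j = natSingle k n (j + m) := by
  induction m with
  | zero => simp
  | succ m ih =>
    rw [pow_succ', ← mulVec_mulVec, ih, jordanBlock_eq_subdiagonal,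
      subdiagonal_mulVec_natSingle, one_smul, add_assoc]

theorem Xzero_mul_sub_mul_Xzero :
    Xzero k n * jordanBlock k n - jordanBlock k n * Xzero k n = jordanBlock k n ^ 2 := by
  refine toLin'.injective (LinearMap.ext_on_range span_range_natSingle fun m => ?_)
  rw [toLin'_apply, toLin'_apply, jordanBlock_pow_mulVec_natSingle]
  simp only [sub_mulVec, ← mulVec_mulVec, mulVec_smul, Xzero_eq_subdiagonal,
    jordanBlock_eq_subdiagonal, subdiagonal_mulVec_natSingle, one_smul]
  push_cast
  -- `(m + 1) • e_{m+2} - m • e_{m+2} = e_{m+2}`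
  rw [← sub_smul, add_sub_cancel_left, one_smul, add_assoc]

theorem commute_jordanBlock_iff {Y : Matrix (Fin n) (Fin n) k} :
    Commute (jordanBlock k n) Y ↔ ∃ p : k[X], Y = aeval (jordanBlock k n) p := by
  constructor
  · refine exists_eq_aeval_of_commute (natSingle k n 0) ?_
    simpa [jordanBlock_pow_mulVec_natSingle] using span_range_natSingle
  · rintro ⟨p, rfl⟩
    simpa using (Commute.all X p).map (aeval (jordanBlock k n))

end JordanBlock

theorem jordanian_full_block_representations_general (k : Type*) [Field k] (n : ℕ)
    (X : Matrix (Fin n) (Fin n) k) :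
    X * jordanBlock k n - jordanBlock k n * X = (jordanBlock k n) ^ 2 ↔
      ∃ p : Polynomial k, X = Xzero k n + Polynomial.aeval (jordanBlock k n) p := by
  calc X * jordanBlock k n - jordanBlock k n * X = jordanBlock k n ^ 2
      ↔ Commute (jordanBlock k n) (X - Xzero k n) := by
        rw [commute_iff_eq, mul_sub, sub_mul, ← Xzero_mul_sub_mul_Xzero,
          sub_eq_sub_iff_sub_eq_sub, eq_comm]
    _ ↔ ∃ p : k[X], X - Xzero k n = aeval (jordanBlock k n) p := commute_jordanBlock_iff
    _ ↔ _ := by simp_rw [sub_eq_iff_eq_add']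

/-- Let `k` be a field and `n ≥ 1`. A matrix `X ∈ M_n(k)` satisfies
`X*J_n - J_n*X = J_n^2` if and only if there exists a polynomial `p ∈ k[t]` such that
`X = X⁰ + p(J_n)`.  (This describes all `n`-dimensional representations of the Jordanian
algebra in which `y` acts by a single full Jordan block.) -/
theorem jordanian_full_block_representations (k : Type*) [Field k] (n : ℕ) (hn : 1 ≤ n)
    (X : Matrix (Fin n) (Fin n) k) :
    X * jordanBlock k n - jordanBlock k n * X = (jordanBlock k n) ^ 2 ↔
      ∃ p : Polynomial k, X = Xzero k n + Polynomial.aeval (jordanBlock k n) p :=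
  jordanian_full_block_representations_general k n X
end

section
/- Let k be an algebraically closed field of characteristic zero, n ≥ 1, and let X and Y be n×n matrices over k satisfying X*Y − Y*X = Y^2. Suppose the representation is irreducible: the only k-subspaces W of k^n satisfying X·W ⊆ W and Y·W ⊆ W are the zero subspace and k^n itself. Then n = 1 and Y = 0. (Consequently the simple finite-dimensional modules over the Jordanian algebra are exactly the one-dimensional modules S_a, a ∈ k, on which x acts by the scalar a and y acts by 0.) -/
/-!
On `ker Y` we have `Y X = X Y - Y² = 0`, so `ker Y` is invariant and irreducibility leaves
`Y = 0` or `Y` invertible. An invertible `Y` would give `Y⁻¹ X - X Y⁻¹ = Y⁻¹ (X Y - Y X) Y⁻¹ = 1`,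
whose trace is `0` on the left and `n ≠ 0` on the right. With `Y = 0` the representation is
irreducible for `X` alone, and the line spanned by an eigenvector of `X` is invariant.
-/

open Matrix

theorem Units.inv_mul_sub_mul_inv_eq_one_of_commutator_eq_sq {R : Type*} [Ring R] (X : R) (u : Rˣ)
    (h : X * u - u * X = u ^ 2) : ↑u⁻¹ * X - X * ↑u⁻¹ = (1 : R) := by
  calc ↑u⁻¹ * X - X * ↑u⁻¹ = ↑u⁻¹ * (X * u - u * X) * ↑u⁻¹ := by
        simp only [mul_sub, sub_mul, mul_assoc, Units.mul_inv, mul_one, Units.inv_mul_cancel_left]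
    _ = 1 := by rw [h, sq, ← mul_assoc, Units.inv_mul, one_mul, Units.mul_inv]

theorem Matrix.mul_sub_mul_ne_one {n R : Type*} [Fintype n] [DecidableEq n] [Nonempty n]
    [CommRing R] [CharZero R] (A B : Matrix n n R) : A * B - B * A ≠ 1 := by
  intro h
  have htrace := congrArg trace h
  rw [trace_sub, trace_mul_comm, sub_self, trace_one] at htrace
  exact Nat.cast_ne_zero.mpr Fintype.card_ne_zero htrace.symm

theorem Matrix.not_isUnit_of_commutator_eq_sq {n R : Type*} [Fintype n] [DecidableEq n]
    [Nonempty n] [CommRing R] [CharZero R] {X Y : Matrix n n R} (h : X * Y - Y * X = Y ^ 2) :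
    ¬IsUnit Y := by
  rintro ⟨u, rfl⟩
  exact mul_sub_mul_ne_one _ _ (u.inv_mul_sub_mul_inv_eq_one_of_commutator_eq_sq X h)

theorem Matrix.mulVec_mulVec_eq_zero_of_commutator_eq_sq {n R : Type*} [Fintype n] [DecidableEq n]
    [CommRing R] {X Y : Matrix n n R} (h : X * Y - Y * X = Y ^ 2) {v : n → R} (hv : Y *ᵥ v = 0) :
    Y *ᵥ (X *ᵥ v) = 0 := by
  have hYX : Y * X = X * Y - Y ^ 2 := by rw [← h]; abel
  rw [mulVec_mulVec, hYX, sub_mulVec, ← mulVec_mulVec, sq, ← mulVec_mulVec, hv, mulVec_zero,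
    mulVec_zero, sub_zero]

theorem Module.End.finrank_eq_one_of_forall_invariant {K V : Type*} [Field K] [IsAlgClosed K]
    [AddCommGroup V] [Module K V] [FiniteDimensional K V] [Nontrivial V] (f : Module.End K V)
    (hirr : ∀ W : Submodule K V, (∀ v ∈ W, f v ∈ W) → W = ⊥ ∨ W = ⊤) :
    Module.finrank K V = 1 := by
  obtain ⟨μ, hμ⟩ := Module.End.exists_eigenvalue f
  obtain ⟨v, hv⟩ := hμ.exists_hasEigenvector
  have hspan_le : Submodule.span K {v} ≤ f.eigenspace μ :=
    (Submodule.span_singleton_le_iff_mem _ _).mpr hv.1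
  have hinv : ∀ w ∈ Submodule.span K {v}, f w ∈ Submodule.span K {v} := fun w hw => by
    rw [Module.End.mem_eigenspace_iff.mp (hspan_le hw)]
    exact Submodule.smul_mem _ μ hw
  rcases hirr _ hinv with hbot | htop
  · exact absurd hbot ((Submodule.span_singleton_eq_bot).not.mpr hv.2)
  · rw [← finrank_top, ← htop, finrank_span_singleton hv.2]

/-- Let `k` be an algebraically closed field of characteristic zero, `n ≥ 1`,
and let `X`, `Y` be `n × n` matrices over `k` with `X*Y - Y*X = Y^2`. If the representation is
irreducible — the only subspaces `W ⊆ k^n` with `X·W ⊆ W` and `Y·W ⊆ W` are `⊥` and `⊤` —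
then `n = 1` and `Y = 0`. -/
theorem jordanian_irreducible_representation (k : Type*) [Field k] [IsAlgClosed k] [CharZero k]
    (n : ℕ) (hn : 1 ≤ n) (X Y : Matrix (Fin n) (Fin n) k)
    (h : X * Y - Y * X = Y ^ 2)
    (hirr : ∀ W : Submodule k (Fin n → k),
      (∀ v ∈ W, X.mulVec v ∈ W) → (∀ v ∈ W, Y.mulVec v ∈ W) → W = ⊥ ∨ W = ⊤) :
    n = 1 ∧ Y = 0 := by
  have : Nonempty (Fin n) := ⟨⟨0, hn⟩⟩
  have hY : Y = 0 := by
    have hXker : ∀ v ∈ LinearMap.ker (toLin' Y), X *ᵥ v ∈ LinearMap.ker (toLin' Y) :=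
      fun v hv => mulVec_mulVec_eq_zero_of_commutator_eq_sq h hv
    have hYker : ∀ v ∈ LinearMap.ker (toLin' Y), Y *ᵥ v ∈ LinearMap.ker (toLin' Y) :=
      fun v hv => by
        rw [LinearMap.mem_ker, toLin'_apply] at hv ⊢
        rw [hv, mulVec_zero]
    rcases hirr _ hXker hYker with hbot | htop
    · exact absurd (isUnit_toLin'_iff.mp ((LinearMap.isUnit_iff_ker_eq_bot _).mpr hbot))
        (not_isUnit_of_commutator_eq_sq h)
    · exact toLin'.map_eq_zero_iff.mp (LinearMap.ker_eq_top.mp htop)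
  subst hY
  refine ⟨?_, rfl⟩
  have hdim := Module.End.finrank_eq_one_of_forall_invariant (toLin' X) fun W hX =>
    hirr W hX fun v _ => by simp [W.zero_mem]
  rwa [Module.finrank_fin_fun] at hdim
end

section
/- Let k be an algebraically closed field of characteristic zero and let X and Y be n×n matrices over k satisfying X*Y − Y*X = Y^2. Then for every λ ∈ k the generalized eigenspace ker((X − λI)^n) ⊆ k^n of X is invariant under Y (and under X), and k^n is the internal direct sum, over the distinct eigenvalues λ of X, of these generalized eigenspaces; in particular every finite-dimensional representation of the Jordanian algebra decomposes as the direct sum of the subrepresentations on the generalized eigenspaces of X. -/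
/-!
The relation says that `ad X` raises powers of `Y`: `[X, Y^m] = m Y^(m+1)`, i.e.
`X Y^m = Y^m (X + m Y)`. Hence `X` preserves the Fitting image `range Y^m` of `Y` (`m` large),
on which `Y` is invertible; there `Y⁻¹ X - X Y⁻¹ = 1`, and taking traces shows, in characteristic
zero, that the Fitting image is zero, i.e. `Y` is nilpotent. Then `(ad X)^j Y = j! Y^(j+1)`
vanishes for large `j`, and an operator on which `ad X` is nilpotent preserves the generalized
eigenspaces of `X` (binomial formula for `(X - λ)^m Y`). The decomposition of `k^n` is the
generalized eigenspace decomposition of `X` over an algebraically closed field.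
-/

open scoped Classical

open Module Module.End

section CommutatorEqSq

variable {A : Type*} [Ring A] {a b : A}

theorem commutator_pow_of_commutator_eq_sq (h : a * b - b * a = b ^ 2) (m : ℕ) :
    a * b ^ m - b ^ m * a = m • b ^ (m + 1) := by
  induction m with
  | zero => simp
  | succ m ih =>
    calc a * b ^ (m + 1) - b ^ (m + 1) * a
        = (a * b ^ m - b ^ m * a) * b + b ^ m * (a * b - b * a) := by
          rw [pow_succ]; noncomm_ring
      _ = (m + 1) • b ^ (m + 1 + 1) := by
          rw [ih, h, smul_mul_assoc, ← pow_succ, ← pow_add, succ_nsmul]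

theorem mul_pow_of_commutator_eq_sq (h : a * b - b * a = b ^ 2) (m : ℕ) :
    a * b ^ m = b ^ m * (a + m • b) := by
  rw [mul_add, mul_smul_comm, ← pow_succ, ← commutator_pow_of_commutator_eq_sq h, add_sub_cancel]

end CommutatorEqSq

section Nilpotent

variable {K V : Type*} [Field K] [CharZero K] [AddCommGroup V] [Module K V]
  [FiniteDimensional K V]

theorem Module.End.subsingleton_of_mul_sub_mul_eq_one {u a : End K V} (h : u * a - a * u = 1) :
    Subsingleton V := by
  have htrace := congrArg (LinearMap.trace K V) h
  rw [map_sub, LinearMap.trace_mul_comm, sub_self, LinearMap.trace_one, eq_comm,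
    Nat.cast_eq_zero] at htrace
  exact finrank_zero_iff.mp htrace

theorem Module.End.subsingleton_of_isUnit_of_commutator_eq_sq {f g : End K V} (hg : IsUnit g)
    (h : f * g - g * f = g ^ 2) : Subsingleton V := by
  obtain ⟨u, rfl⟩ := hg
  refine subsingleton_of_mul_sub_mul_eq_one (u := ↑u⁻¹) (a := f) ?_
  calc ↑u⁻¹ * f - f * ↑u⁻¹ = ↑u⁻¹ * (f * u - u * f) * ↑u⁻¹ := by
        simp only [mul_sub, sub_mul, mul_assoc, Units.mul_inv, mul_one, Units.inv_mul_cancel_left]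
    _ = 1 := by rw [h, sq, mul_assoc, Units.mul_inv_cancel_right, Units.inv_mul]

theorem Module.End.isNilpotent_of_commutator_eq_sq {f g : End K V} (h : f * g - g * f = g ^ 2) :
    IsNilpotent g := by
  obtain ⟨m, hm⟩ := Filter.eventually_atTop.mp g.eventually_iInf_range_pow_eq
  have hstable : LinearMap.range (g ^ (m + 1)) = LinearMap.range (g ^ m) := by
    rw [← hm m le_rfl, hm (m + 1) m.le_succ]
  set I := LinearMap.range (g ^ m)
  have hgI : ∀ x ∈ I, g x ∈ I := by
    rintro _ ⟨v, rfl⟩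
    exact hstable ▸ ⟨v, by rw [pow_succ', Module.End.mul_apply]⟩
  have hfI : ∀ x ∈ I, f x ∈ I := by
    rintro _ ⟨v, rfl⟩
    exact ⟨f v + m • g v, by
      rw [← Module.End.mul_apply, mul_pow_of_commutator_eq_sq h, Module.End.mul_apply]; simp⟩
  have hunit : IsUnit (g.restrict hgI) := by
    have hsurj : Function.Surjective (g.restrict hgI) := by
      rintro ⟨_, hx⟩
      obtain ⟨v, rfl⟩ := hstable ▸ hx
      exact ⟨⟨(g ^ m) v, v, rfl⟩, Subtype.ext (by simp [pow_succ'])⟩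
    exact (Module.End.isUnit_iff _).mpr ⟨LinearMap.injective_iff_surjective.mpr hsurj, hsurj⟩
  have hrel : f.restrict hfI * g.restrict hgI - g.restrict hgI * f.restrict hfI =
      g.restrict hgI ^ 2 := by
    ext x
    simpa [sq] using congrArg (fun φ : End K V => φ x) h
  have : Subsingleton I := subsingleton_of_isUnit_of_commutator_eq_sq hunit hrel
  refine ⟨m, LinearMap.range_eq_bot.mp ?_⟩
  exact Submodule.subsingleton_iff_eq_bot.mp this

end Nilpotent

section AdNilpotent

attribute [local instance] LieRing.ofAssociativeRing

theorem LieAlgebra.ad_pow_apply_of_commutator_eq_sq {R A : Type*} [CommRing R] [Ring A]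
    [Algebra R A] {a b : A} (h : a * b - b * a = b ^ 2) (j : ℕ) :
    (LieAlgebra.ad R A a ^ j) b = j.factorial • b ^ (j + 1) := by
  induction j with
  | zero => simp
  | succ j ih =>
    rw [pow_succ', Module.End.mul_apply, ih, map_nsmul, LieAlgebra.ad_apply, Ring.lie_def,
      commutator_pow_of_commutator_eq_sq h, smul_smul, Nat.factorial_succ, mul_comm]

theorem Module.End.mapsTo_maxGenEigenspace_of_commutator_eq_sq {K V : Type*} [Field K]
    [CharZero K] [AddCommGroup V] [Module K V] [FiniteDimensional K V] {f g : End K V}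
    (h : f * g - g * f = g ^ 2) (μ : K) :
    Set.MapsTo g (f.maxGenEigenspace μ) (f.maxGenEigenspace μ) := by
  obtain ⟨k, hk⟩ := isNilpotent_of_commutator_eq_sq h
  have hg : g ∈ (LieAlgebra.ad K (End K V) f).maxGenEigenspace 0 :=
    (mem_maxGenEigenspace _ _ _).mpr ⟨k, by
      simp [LieAlgebra.ad_pow_apply_of_commutator_eq_sq h, pow_succ, hk]⟩
  intro v hv
  simpa using LieModule.lie_mem_maxGenEigenspace_toEnd (M := V) hg
    (by simpa using hv)

end AdNilpotent

theorem Module.End.isInternal_maxGenEigenspace_spectrum {K V : Type*} [Field K] [IsAlgClosed K]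
    [AddCommGroup V] [Module K V] [FiniteDimensional K V] (f : End K V) :
    DirectSum.IsInternal (fun μ : spectrum K f => f.maxGenEigenspace μ) := by
  refine DirectSum.isInternal_submodule_of_iSupIndep_of_iSup_eq_top
    ((independent_maxGenEigenspace f).comp Subtype.val_injective) (eq_top_iff.mpr ?_)
  rw [← iSup_maxGenEigenspace_eq_top f]
  refine iSup_le fun μ => ?_
  by_cases hμ : μ ∈ spectrum K f
  · exact le_iSup_of_le ⟨μ, hμ⟩ le_rfl
  · have hbot : f.maxGenEigenspace μ = ⊥ := by
      by_contra hne
      exact hμ ((hasUnifEigenvalue_iff_hasUnifEigenvalue_one (by simp)).mp hne).mem_spectrum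
    exact hbot ▸ bot_le

theorem Matrix.ker_mulVecLin_sub_smul_one_pow_card {K ι : Type*} [Field K] [Fintype ι]
    [DecidableEq ι] (X : Matrix ι ι K) (μ : K) :
    LinearMap.ker ((X - μ • 1) ^ Fintype.card ι).mulVecLin =
      maxGenEigenspace (Matrix.toLinAlgEquiv' X) μ := by
  rw [maxGenEigenspace_eq_genEigenspace_finrank, finrank_fintype_fun_eq_card, genEigenspace_nat,
    ← map_one Matrix.toLinAlgEquiv', ← map_smul, ← map_sub, ← map_pow]
  rfl

theorem jordanian_generalized_eigenspace_decomposition_general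
    (k : Type*) [Field k] [IsAlgClosed k] [CharZero k]
    (n : ℕ) (X Y : Matrix (Fin n) (Fin n) k)
    (h : X * Y - Y * X = Y ^ 2)
    (G : k → Submodule k (Fin n → k))
    (hG : ∀ lam : k, G lam =
      LinearMap.ker (Matrix.mulVecLin ((X - lam • (1 : Matrix (Fin n) (Fin n) k)) ^ n))) :
    (∀ lam : k, (∀ v ∈ G lam, Y.mulVec v ∈ G lam) ∧ (∀ v ∈ G lam, X.mulVec v ∈ G lam)) ∧
    DirectSum.IsInternal (fun lam : spectrum k X => G lam) := by
  obtain rfl : G = fun lam => maxGenEigenspace (Matrix.toLinAlgEquiv' X) lam := funext fun lam => by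
    simpa [hG] using Matrix.ker_mulVecLin_sub_smul_one_pow_card X lam
  have hrel := congrArg Matrix.toLinAlgEquiv' h
  rw [map_sub, map_mul, map_mul, map_pow] at hrel
  refine ⟨fun lam => ⟨fun v hv => ?_, fun v hv => ?_⟩, ?_⟩
  · simpa using mapsTo_maxGenEigenspace_of_commutator_eq_sq hrel lam hv
  · simpa using mapsTo_maxGenEigenspace_of_comm (Commute.refl _) lam hv
  · rw [← AlgEquiv.spectrum_eq Matrix.toLinAlgEquiv' X]
    exact isInternal_maxGenEigenspace_spectrum _

/-- Let `k` be an algebraically closed field of characteristic zero and `X`, `Y`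
be `n × n` matrices over `k` with `X*Y - Y*X = Y^2`.  For `λ ∈ k` let
`G λ = ker((X - λI)^n) ⊆ k^n` be the generalized eigenspace of `X` at `λ`.  Then every `G λ` is
invariant under `Y` (and under `X`), and `k^n` is the internal direct sum of the generalized
eigenspaces `G λ` over the distinct eigenvalues `λ` of `X` (the spectrum of `X`); in particular
the representation decomposes as the direct sum of the subrepresentations on the `G λ`. -/
theorem jordanian_generalized_eigenspace_decomposition
    (k : Type*) [Field k] [IsAlgClosed k] [CharZero k]
    (n : ℕ) (hn : 1 ≤ n) (X Y : Matrix (Fin n) (Fin n) k)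
    (h : X * Y - Y * X = Y ^ 2)
    (G : k → Submodule k (Fin n → k))
    (hG : ∀ lam : k, G lam =
      LinearMap.ker (Matrix.mulVecLin ((X - lam • (1 : Matrix (Fin n) (Fin n) k)) ^ n))) :
    (∀ lam : k, (∀ v ∈ G lam, Y.mulVec v ∈ G lam) ∧ (∀ v ∈ G lam, X.mulVec v ∈ G lam)) ∧
    DirectSum.IsInternal (fun lam : spectrum k X => G lam) :=
  jordanian_generalized_eigenspace_decomposition_general k n X Y h G hG
end

section
/- Let k be a field of characteristic zero and n ≥ 1, and let A = Algebra.adjoin k {X⁰, J_n} be the unital k-subalgebra of n×n matrices generated by X⁰ and J_n. Then the dimension of A as a k-vector space equals (m+1)² = (n+1)²/4 if n = 2m+1 is odd, and equals m(m+1) = n(n+2)/4 if n = 2m is even. -/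
/-!
Write `W_s(p)` for the matrix with entry `p(j)` at `(j + s, j)`, `p` a polynomial. Then
`X⁰ = W_1(T)`, `J_n = W_1(1)` and `W_s(p) W_t(q) = W_{s+t}(p(T + t) q)`, so the matrices
`W_s(p)` with `deg p ≤ s` span a subalgebra containing the generators. Conversely each of them
lies in `A`, by induction on `s`: writing `p = T r(T + 1) + c`, one has
`W_{s+1}(p) = W_s(r) X⁰ + J_n W_s(c)`. Different `s` occupy different subdiagonals, and on the
`s`-th one only the values `p(0), …, p(n - s - 1)` are seen; by interpolation they are those of a
polynomial of degree `< min (s + 1) (n - s)`, uniquely. Hence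
`dim A = ∑_{s < n} min (s + 1) (n - s)`.
-/

open Polynomial

namespace Jordanian

section WeightedShift

variable {R : Type*} [Semiring R] {n : ℕ}

def weightedShift (n s : ℕ) (f : ℕ → R) : Matrix (Fin n) (Fin n) R :=
  Matrix.of fun i j => if (i : ℕ) = j + s then f j else 0

theorem weightedShift_apply (s : ℕ) (f : ℕ → R) (i j : Fin n) :
    weightedShift n s f i j = if (i : ℕ) = j + s then f j else 0 :=
  rfl

theorem weightedShift_mul (s t : ℕ) (f g : ℕ → R) :
    weightedShift n s f * weightedShift n t g =
      weightedShift n (s + t) fun j => f (j + t) * g j := by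
  ext i j
  rw [Matrix.mul_apply, weightedShift_apply]
  by_cases hjt : (j : ℕ) + t < n
  · rw [Finset.sum_eq_single ⟨j + t, hjt⟩]
    · have : (i : ℕ) = j + t + s ↔ (i : ℕ) = j + (s + t) := by omega
      simp [weightedShift_apply, this]
    · intro l _ hl
      have : (l : ℕ) ≠ j + t := fun h => hl (Fin.ext h)
      simp [weightedShift_apply, this]
    · simp
  · have : ¬ (i : ℕ) = j + (s + t) := by omega
    rw [if_neg this]
    refine Finset.sum_eq_zero fun l _ => ?_
    have : ¬ (l : ℕ) = j + t := by omega
    simp [weightedShift_apply, this]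

theorem weightedShift_congr {s : ℕ} {f g : ℕ → R} (h : ∀ j, j + s < n → f j = g j) :
    weightedShift n s f = weightedShift n s g := by
  ext i j
  simp only [weightedShift_apply]
  split_ifs with hij
  · exact h j (by omega)
  · rfl

theorem weightedShift_of_le {s : ℕ} (f : ℕ → R) (hs : n ≤ s) : weightedShift n s f = 0 := by
  ext i j
  have : ¬ (i : ℕ) = j + s := by omega
  simp [weightedShift_apply, this]

theorem weightedShift_zero_one : weightedShift n 0 (fun _ => (1 : R)) = 1 := by
  ext i j
  simp [weightedShift_apply, Matrix.one_apply, Fin.ext_iff]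

end WeightedShift

theorem natDegree_le_of_mem_degreeLT {R : Type*} [Semiring R] {m : ℕ} {p : R[X]}
    (hp : p ∈ degreeLT R (m + 1)) :
    p.natDegree ≤ m :=
  natDegree_le_of_degree_le (mem_degreeLE.1 (degreeLT_succ_eq_degreeLE (R := R) ▸ hp))

section PolyShift

variable {k : Type*} [Field k] {n : ℕ}

variable (k n) in
noncomputable def polyShift (s : ℕ) : k[X] →ₗ[k] Matrix (Fin n) (Fin n) k where
  toFun p := weightedShift n s fun j => p.eval (j : k)
  map_add' p q := by
    ext i j; simp only [Matrix.add_apply, weightedShift_apply]; split_ifs <;> simp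
  map_smul' c p := by
    ext i j; simp only [Matrix.smul_apply, weightedShift_apply]; split_ifs <;> simp

theorem polyShift_apply (s : ℕ) (p : k[X]) :
    polyShift k n s p = weightedShift n s fun j => p.eval (j : k) :=
  rfl

theorem polyShift_mul (s t : ℕ) (p q : k[X]) :
    polyShift k n s p * polyShift k n t q = polyShift k n (s + t) (taylor (t : k) p * q) := by
  simp only [polyShift_apply, weightedShift_mul, eval_mul, taylor_eval, Nat.cast_add]

theorem polyShift_congr {s : ℕ} {p q : k[X]}
    (h : ∀ j, j + s < n → p.eval (j : k) = q.eval (j : k)) :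
    polyShift k n s p = polyShift k n s q :=
  weightedShift_congr h

theorem polyShift_zero_one : polyShift k n 0 1 = 1 := by
  simp only [polyShift_apply, eval_one, weightedShift_zero_one]

theorem jordanBlock_eq_polyShift : jordanBlock k n = polyShift k n 1 1 := by
  simp only [polyShift_apply, eval_one]; rfl

theorem Xzero_eq_polyShift : Xzero k n = polyShift k n 1 X := by
  simp only [polyShift_apply, eval_X]; rfl

theorem polyShift_mem_adjoin {s : ℕ} {p : k[X]} (hp : p.natDegree ≤ s) :
    polyShift k n s p ∈ Algebra.adjoin k {Xzero k n, jordanBlock k n} := by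
  induction s generalizing p with
  | zero =>
    rw [eq_C_of_natDegree_le_zero hp, ← mul_one (C _), ← smul_eq_C_mul, map_smul,
      polyShift_zero_one]
    exact Subalgebra.smul_mem _ (one_mem _) _
  | succ s ih =>
    set q := taylor (-1 : k) p.divX
    have hq : q.natDegree ≤ s := by
      rw [natDegree_taylor, natDegree_divX_eq_natDegree_tsub_one]; omega
    have hsplit : polyShift k n (s + 1) p =
        polyShift k n s q * Xzero k n + jordanBlock k n * polyShift k n s (C (p.coeff 0)) := by
      conv_lhs => rw [← X_mul_divX_add p]
      rw [Xzero_eq_polyShift, jordanBlock_eq_polyShift, polyShift_mul, polyShift_mul, map_add,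
        taylor_taylor, taylor_one, add_comm 1 s]
      simp [mul_comm]
    rw [hsplit]
    exact add_mem (mul_mem (ih hq) (Algebra.subset_adjoin (by simp)))
      (mul_mem (Algebra.subset_adjoin (by simp)) (ih ((natDegree_C _).trans_le s.zero_le)))

variable (k n) in
noncomputable def polyShiftSum :
    (Π s : Fin n, degreeLT k (min (s + 1) (n - s))) →ₗ[k] Matrix (Fin n) (Fin n) k :=
  ∑ s : Fin n, (polyShift k n s).comp ((degreeLT k _).subtype.comp (LinearMap.proj s))

theorem polyShiftSum_apply (c : Π s : Fin n, degreeLT k (min (s + 1) (n - s))) :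
    polyShiftSum k n c = ∑ s : Fin n, polyShift k n s (c s) := by
  simp [polyShiftSum]

theorem polyShiftSum_apply_add (c : Π s : Fin n, degreeLT k (min (s + 1) (n - s))) (s : Fin n)
    (j : ℕ) (hj : j + s < n) :
    polyShiftSum k n c ⟨j + s, hj⟩ ⟨j, by omega⟩ = (c s : k[X]).eval (j : k) := by
  rw [polyShiftSum_apply, Matrix.sum_apply, Finset.sum_eq_single s]
  · simp [polyShift_apply, weightedShift_apply]
  · intro t _ hts
    have : (s : ℕ) ≠ t := fun h => hts (Fin.ext h.symm)
    simp [polyShift_apply, weightedShift_apply, this]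
  · simp

variable [CharZero k]

theorem exists_mem_degreeLT_polyShift_eq {s : ℕ} {p : k[X]} (hp : p.natDegree ≤ s) :
    ∃ q ∈ degreeLT k (min (s + 1) (n - s)), polyShift k n s q = polyShift k n s p := by
  by_cases hsn : s + 1 ≤ n - s
  · refine ⟨p, mem_degreeLT.2 ?_, rfl⟩
    rw [min_eq_left hsn]
    exact degree_le_natDegree.trans_lt (by exact_mod_cast Nat.lt_succ_of_le hp)
  · have hinj : Set.InjOn (fun j : ℕ => (j : k)) (Finset.range (n - s)) :=
      fun a _ b _ h => Nat.cast_injective h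
    refine ⟨Lagrange.interpolate (Finset.range (n - s)) (fun j : ℕ => (j : k))
      (fun j => p.eval (j : k)), mem_degreeLT.2 ?_, polyShift_congr fun j hj => ?_⟩
    · rw [min_eq_right (by omega)]
      simpa using Lagrange.degree_interpolate_lt _ hinj
    · exact Lagrange.eval_interpolate_at_node _ hinj (Finset.mem_range.2 (by omega))

theorem polyShiftSum_injective : Function.Injective (polyShiftSum k n) := by
  refine (injective_iff_map_eq_zero _).2 fun c hc => funext fun s => Subtype.ext ?_
  refine eq_zero_of_natDegree_lt_card_of_eval_eq_zero (c s : k[X])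
    (f := fun j : Fin (n - s) => ((j : ℕ) : k)) (fun a b h => Fin.ext (Nat.cast_injective h))
    (fun j => ?_) ?_
  · rw [← polyShiftSum_apply_add c s j (by omega), hc, Matrix.zero_apply]
  · have hmem : (c s : k[X]) ∈ degreeLT k (n - s - 1 + 1) :=
      degreeLT_mono (by omega) (c s).2
    have := natDegree_le_of_mem_degreeLT hmem
    rw [Fintype.card_fin]; omega

theorem polyShift_mem_range {s : ℕ} {p : k[X]} (hp : p.natDegree ≤ s) :
    polyShift k n s p ∈ LinearMap.range (polyShiftSum k n) := by
  rcases lt_or_ge s n with hs | hs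
  · obtain ⟨q, hq, hqp⟩ := exists_mem_degreeLT_polyShift_eq (n := n) hp
    refine ⟨Pi.single ⟨s, hs⟩ ⟨q, hq⟩, ?_⟩
    rw [polyShiftSum_apply, Finset.sum_eq_single ⟨s, hs⟩ (fun t _ ht => by simp [ht]) (by simp)]
    simpa using hqp
  · rw [polyShift_apply, weightedShift_of_le _ hs]
    exact zero_mem _

theorem mul_mem_range_polyShiftSum {x y : Matrix (Fin n) (Fin n) k}
    (hx : x ∈ LinearMap.range (polyShiftSum k n))
    (hy : y ∈ LinearMap.range (polyShiftSum k n)) :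
    x * y ∈ LinearMap.range (polyShiftSum k n) := by
  obtain ⟨c, rfl⟩ := hx
  obtain ⟨d, rfl⟩ := hy
  rw [polyShiftSum_apply, polyShiftSum_apply, Finset.sum_mul_sum]
  refine Submodule.sum_mem _ fun s _ => Submodule.sum_mem _ fun t _ => ?_
  have hc := natDegree_le_of_mem_degreeLT (degreeLT_mono (min_le_left _ _) (c s).2)
  have hd := natDegree_le_of_mem_degreeLT (degreeLT_mono (min_le_left _ _) (d t).2)
  rw [polyShift_mul]
  refine polyShift_mem_range (natDegree_mul_le.trans ?_)
  rw [natDegree_taylor]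
  omega

variable (k n) in
noncomputable def polyShiftAlgebra : Subalgebra k (Matrix (Fin n) (Fin n) k) :=
  (LinearMap.range (polyShiftSum k n)).toSubalgebra
    (polyShift_zero_one (k := k) ▸ polyShift_mem_range natDegree_one.le)
    fun _ _ => mul_mem_range_polyShiftSum

theorem adjoin_eq_polyShiftAlgebra :
    Algebra.adjoin k {Xzero k n, jordanBlock k n} = polyShiftAlgebra k n := by
  apply le_antisymm
  · rw [Algebra.adjoin_le_iff, Set.insert_subset_iff, Set.singleton_subset_iff]
    exact ⟨Xzero_eq_polyShift (k := k) ▸ polyShift_mem_range natDegree_X_le,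
      jordanBlock_eq_polyShift (k := k) ▸
        polyShift_mem_range (natDegree_one.trans_le zero_le_one)⟩
  · rintro _ ⟨c, rfl⟩
    rw [polyShiftSum_apply]
    exact Subalgebra.sum_mem _ fun s _ => polyShift_mem_adjoin
      (natDegree_le_of_mem_degreeLT (degreeLT_mono (min_le_left _ _) (c s).2))

theorem finrank_polyShiftAlgebra :
    Module.finrank k (polyShiftAlgebra k n) = ∑ s ∈ Finset.range n, min (s + 1) (n - s) := by
  rw [← Subalgebra.finrank_toSubmodule, polyShiftAlgebra, Submodule.toSubalgebra_toSubmodule,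
    LinearMap.finrank_range_of_inj polyShiftSum_injective, Module.finrank_pi_fintype]
  simp_rw [Module.finrank_eq_card_basis (degreeLT.basis k _), Fintype.card_fin]
  exact Fin.sum_univ_eq_sum_range (fun s => min (s + 1) (n - s)) n

end PolyShift

theorem sum_range_min_succ_sub_add_two (n : ℕ) :
    ∑ s ∈ Finset.range (n + 2), min (s + 1) (n + 2 - s) =
      ∑ s ∈ Finset.range n, min (s + 1) (n - s) + (n + 2) := by
  rw [Finset.sum_range_succ, Finset.sum_range_succ']
  have : ∀ s ∈ Finset.range n, min (s + 1 + 1) (n + 2 - (s + 1)) = min (s + 1) (n - s) + 1 := by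
    intro s hs; have := Finset.mem_range.1 hs; omega
  rw [Finset.sum_congr rfl this, Finset.sum_add_distrib]
  simp only [Finset.sum_const, Finset.card_range, smul_eq_mul, mul_one]
  omega

theorem sum_range_min_succ_sub_odd (m : ℕ) :
    ∑ s ∈ Finset.range (2 * m + 1), min (s + 1) (2 * m + 1 - s) = (m + 1) ^ 2 := by
  induction m with
  | zero => simp
  | succ m ih =>
    rw [show 2 * (m + 1) + 1 = 2 * m + 1 + 2 by ring, sum_range_min_succ_sub_add_two, ih]
    ring

theorem sum_range_min_succ_sub_even (m : ℕ) :
    ∑ s ∈ Finset.range (2 * m), min (s + 1) (2 * m - s) = m * (m + 1) := by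
  induction m with
  | zero => simp
  | succ m ih =>
    rw [show 2 * (m + 1) = 2 * m + 2 by ring, sum_range_min_succ_sub_add_two, ih]
    ring

end Jordanian

theorem jordanian_full_block_image_dimension_general (k : Type*) [Field k] [CharZero k]
    (n : ℕ)
    (A : Subalgebra k (Matrix (Fin n) (Fin n) k))
    (hA : A = Algebra.adjoin k {Xzero k n, jordanBlock k n}) :
    (∀ m : ℕ, n = 2 * m + 1 → Module.finrank k A = (m + 1) ^ 2) ∧
    (∀ m : ℕ, n = 2 * m → Module.finrank k A = m * (m + 1)) := by
  rw [hA, Jordanian.adjoin_eq_polyShiftAlgebra, Jordanian.finrank_polyShiftAlgebra]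
  exact ⟨fun m hm => hm ▸ Jordanian.sum_range_min_succ_sub_odd m,
    fun m hm => hm ▸ Jordanian.sum_range_min_succ_sub_even m⟩

/-- Let `k` be a field of characteristic zero, `n ≥ 1`, and let
`A = Algebra.adjoin k {X⁰, J_n}` be the unital `k`-subalgebra of `n × n` matrices generated
by `X⁰` and `J_n`.  Then `dim_k A = (m+1)² = (n+1)²/4` if `n = 2m+1` is odd, and
`dim_k A = m(m+1) = n(n+2)/4` if `n = 2m` is even. -/
theorem jordanian_full_block_image_dimension (k : Type*) [Field k] [CharZero k]
    (n : ℕ) (hn : 1 ≤ n)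
    (A : Subalgebra k (Matrix (Fin n) (Fin n) k))
    (hA : A = Algebra.adjoin k {Xzero k n, jordanBlock k n}) :
    (∀ m : ℕ, n = 2 * m + 1 → Module.finrank k A = (m + 1) ^ 2) ∧
    (∀ m : ℕ, n = 2 * m → Module.finrank k A = m * (m + 1)) :=
  jordanian_full_block_image_dimension_general k n A hA
end

section
/- Let k be an algebraically closed field of characteristic zero and let X and Y be n×n matrices over k satisfying X*Y − Y*X = Y^2. Then X and Y can be simultaneously triangularized: there exists an invertible n×n matrix P such that both P*X*P⁻¹ and P*Y*P⁻¹ are upper triangular, i.e. all their entries strictly below the main diagonal vanish. -/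
/-!
If `Y` were invertible, `tr ((XY - YX) Y⁻²) = tr (X Y⁻¹) - tr (Y X Y⁻²) = 0` would contradict
`tr (Y² Y⁻²) = dim V ≠ 0` in characteristic zero. So `ker Y ≠ 0`; it is `X`-stable because
`YX = XY - Y²`, hence contains an eigenvector `v` of `X`. The line `k ∙ v` is stable under `X` and
`Y`, the relation descends to `V ⧸ k ∙ v`, and induction on the dimension yields a basis, starting
with `v` followed by lifts of a basis of the quotient, in which `X` and `Y` are upper triangular.
-/

open Module Submodule

namespace Module.Basis

variable {R V : Type*} [CommRing R] [AddCommGroup V] [Module R V] {W : Submodule R V}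
  {f : V →ₗ[R] V} (hf : W ≤ W.comap f)

section

variable {m n : Type*} [Fintype m] [Fintype n] [DecidableEq m] [DecidableEq n]
  (bW : Basis m R W) (bQ : Basis n R (V ⧸ W))

theorem toMatrix_sumQuot_inl_inl (i j : m) :
    LinearMap.toMatrix (sumQuot bW bQ) (sumQuot bW bQ) f (.inl i) (.inl j) =
      LinearMap.toMatrix bW bW (f.restrict hf) i j := by
  rw [LinearMap.toMatrix_apply, LinearMap.toMatrix_apply, sumQuot_inl,
    sumQuot_repr_inl_of_mem bW bQ (f (bW j)) (hf (bW j).2), LinearMap.restrict_apply]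

include hf in
theorem toMatrix_sumQuot_inr_inl (i : n) (j : m) :
    LinearMap.toMatrix (sumQuot bW bQ) (sumQuot bW bQ) f (.inr i) (.inl j) = 0 := by
  rw [LinearMap.toMatrix_apply, sumQuot_inl,
    sumQuot_repr_inr_of_mem bW bQ (f (bW j)) (hf (bW j).2)]

theorem toMatrix_sumQuot_inr_inr (i j : n) :
    LinearMap.toMatrix (sumQuot bW bQ) (sumQuot bW bQ) f (.inr i) (.inr j) =
      LinearMap.toMatrix bQ bQ (W.mapQ W f hf) i j := by
  rw [LinearMap.toMatrix_apply, LinearMap.toMatrix_apply, sumQuot_repr_inr,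
    ← sumQuot_inr bW bQ j]
  rfl

end

theorem blockTriangular_toMatrix_sumQuot {a b : ℕ} (bW : Basis (Fin a) R W)
    (bQ : Basis (Fin b) R (V ⧸ W))
    (hW : (LinearMap.toMatrix bW bW (f.restrict hf)).BlockTriangular id)
    (hQ : (LinearMap.toMatrix bQ bQ (W.mapQ W f hf)).BlockTriangular id) :
    (LinearMap.toMatrix ((sumQuot bW bQ).reindex finSumFinEquiv)
      ((sumQuot bW bQ).reindex finSumFinEquiv) f).BlockTriangular id := by
  intro i j hji
  rw [id, id] at hji
  rw [LinearMap.toMatrix_apply, reindex_apply, repr_reindex_apply, ← LinearMap.toMatrix_apply]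
  induction i using Fin.addCases with
  | left i =>
    induction j using Fin.addCases with
    | left j =>
      rw [finSumFinEquiv_symm_apply_castAdd, finSumFinEquiv_symm_apply_castAdd,
        toMatrix_sumQuot_inl_inl hf bW bQ]
      exact hW (Fin.lt_def.mpr (Fin.lt_def.mp hji))
    | right j =>
      have := Fin.lt_def.mp hji
      simp only [Fin.val_natAdd, Fin.val_castAdd] at this
      omega
  | right i =>
    induction j using Fin.addCases with
    | left j =>
      rw [finSumFinEquiv_symm_apply_castAdd, finSumFinEquiv_symm_apply_natAdd,
        toMatrix_sumQuot_inr_inl hf bW bQ]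
    | right j =>
      rw [finSumFinEquiv_symm_apply_natAdd, finSumFinEquiv_symm_apply_natAdd,
        toMatrix_sumQuot_inr_inr hf bW bQ]
      exact hQ (Fin.lt_def.mpr (Nat.lt_of_add_lt_add_left (Fin.lt_def.mp hji)))

theorem toMatrix_basisFun_mul_mul_inv {ι : Type*} [Fintype ι] [DecidableEq ι]
    (b : Basis ι R (ι → R)) (M : Matrix ι ι R) :
    b.toMatrix (Pi.basisFun R ι) * M * (b.toMatrix (Pi.basisFun R ι))⁻¹ =
      LinearMap.toMatrix b b (Matrix.toLin' M) := by
  rw [Matrix.inv_eq_right_inv (b.toMatrix_mul_toMatrix_flip _)]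
  conv_lhs => rw [← LinearMap.toMatrix'_toLin' M, ← LinearMap.toMatrix_eq_toMatrix']
  exact basis_toMatrix_mul_linearMap_toMatrix_mul_basis_toMatrix _ _ _ _ _

end Module.Basis

namespace Module.End

variable {k V : Type*} [Field k] [AddCommGroup V] [Module k V] {X Y : End k V}

theorem not_isUnit_of_commutator_eq_sq [CharZero k] [FiniteDimensional k V] [Nontrivial V]
    (h : X * Y - Y * X = Y ^ 2) : ¬ IsUnit Y := by
  rintro ⟨u, rfl⟩
  have htr : LinearMap.trace k V (↑u ^ 2 * ↑u⁻¹ * ↑u⁻¹) = 0 := by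
    rw [← h, sub_mul, sub_mul, map_sub, sub_eq_zero, mul_assoc (↑u : End k V) X,
      mul_assoc (↑u : End k V), LinearMap.trace_mul_comm k (↑u : End k V)]
    simp only [mul_assoc, Units.mul_inv, Units.inv_mul, mul_one]
  simp only [sq, Units.mul_inv_cancel_right, Units.mul_inv, LinearMap.trace_one] at htr
  exact Module.finrank_pos.ne' (Nat.cast_eq_zero.mp htr)

theorem mem_ker_of_commutator_eq_sq (h : X * Y - Y * X = Y ^ 2) {w : V}
    (hw : w ∈ LinearMap.ker Y) : X w ∈ LinearMap.ker Y := by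
  have hYX : Y * X = X * Y - Y ^ 2 := by rw [← h, sub_sub_cancel]
  rw [LinearMap.mem_ker] at hw ⊢
  simpa [sq, hw] using congrArg (· w) hYX

theorem exists_eigenvector_of_commutator_eq_sq [IsAlgClosed k] [CharZero k]
    [FiniteDimensional k V] [Nontrivial V] (h : X * Y - Y * X = Y ^ 2) :
    ∃ v ≠ 0, Y v = 0 ∧ ∃ μ : k, X v = μ • v := by
  have : Nontrivial (LinearMap.ker Y) := by
    rw [Submodule.nontrivial_iff_ne_bot, Ne, LinearMap.ker_eq_bot]
    exact fun hinj => not_isUnit_of_commutator_eq_sq h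
      ((isUnit_iff Y).mpr ⟨hinj, LinearMap.injective_iff_surjective.mp hinj⟩)
  obtain ⟨μ, hμ⟩ := exists_eigenvalue (X.restrict fun _ => mem_ker_of_commutator_eq_sq h)
  obtain ⟨⟨v, hv⟩, hXv⟩ := hμ.exists_hasEigenvector
  refine ⟨v, fun h0 => hXv.2 (by simp [h0]), hv, μ, ?_⟩
  simpa using congrArg Subtype.val hXv.apply_eq_smul

theorem mapQ_commutator_eq_sq (W : Submodule k V) (hX : W ≤ W.comap X) (hY : W ≤ W.comap Y)
    (h : X * Y - Y * X = Y ^ 2) :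
    W.mapQ W X hX * W.mapQ W Y hY - W.mapQ W Y hY * W.mapQ W X hX = W.mapQ W Y hY ^ 2 := by
  refine Submodule.linearMap_qext _ (LinearMap.ext fun x => ?_)
  simpa [sq, Submodule.Quotient.mk_sub] using congrArg (fun Z => W.mkQ (Z x)) h

theorem exists_basis_blockTriangular_toMatrix_of_commutator_eq_sq [IsAlgClosed k] [CharZero k]
    [FiniteDimensional k V] (h : X * Y - Y * X = Y ^ 2) (d : ℕ) (hd : finrank k V = d) :
    ∃ b : Basis (Fin d) k V, (LinearMap.toMatrix b b X).BlockTriangular id ∧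
      (LinearMap.toMatrix b b Y).BlockTriangular id := by
  induction d generalizing V with
  | zero => exact ⟨finBasisOfFinrankEq k V hd, fun i => i.elim0, fun i => i.elim0⟩
  | succ d ih =>
    have : Nontrivial V := Module.nontrivial_of_finrank_eq_succ hd
    obtain ⟨v, hv0, hYv, μ, hXv⟩ := exists_eigenvector_of_commutator_eq_sq h
    set W := k ∙ v
    have hX : W ≤ W.comap X := by
      rw [span_singleton_le_iff_mem, mem_comap, hXv]
      exact smul_mem _ _ (mem_span_singleton_self v)
    have hY : W ≤ W.comap Y := by
      rw [span_singleton_le_iff_mem, mem_comap, hYv]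
      exact zero_mem _
    have hW : finrank k W = 1 := finrank_span_singleton hv0
    obtain ⟨bQ, hQX, hQY⟩ := ih (mapQ_commutator_eq_sq W hX hY h)
      (by have := W.finrank_quotient_add_finrank; omega)
    let bW : Basis (Fin 1) k W := finBasisOfFinrankEq k W hW
    rw [Nat.add_comm d 1]
    exact ⟨(bW.sumQuot bQ).reindex finSumFinEquiv,
      Basis.blockTriangular_toMatrix_sumQuot hX bW bQ (fun i j hji => absurd hji (by omega)) hQX,
      Basis.blockTriangular_toMatrix_sumQuot hY bW bQ (fun i j hji => absurd hji (by omega)) hQY⟩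

end Module.End

theorem jordanian_simultaneous_triangularization_general
    (k : Type*) [Field k] [IsAlgClosed k] [CharZero k]
    (n : ℕ) (X Y : Matrix (Fin n) (Fin n) k)
    (h : X * Y - Y * X = Y ^ 2) :
    ∃ P : Matrix (Fin n) (Fin n) k, IsUnit P ∧
      (P * X * P⁻¹).BlockTriangular id ∧ (P * Y * P⁻¹).BlockTriangular id := by
  have hLin : Matrix.toLin' X * Matrix.toLin' Y - Matrix.toLin' Y * Matrix.toLin' X =
      Matrix.toLin' Y ^ 2 := by
    have hAlg := congrArg Matrix.toLinAlgEquiv' h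
    rwa [map_sub, map_mul, map_mul, map_pow] at hAlg
  obtain ⟨b, hX, hY⟩ :=
    End.exists_basis_blockTriangular_toMatrix_of_commutator_eq_sq hLin n (finrank_fin_fun k)
  let P := b.toMatrix (Pi.basisFun k (Fin n))
  have : Invertible P := b.invertibleToMatrix _
  refine ⟨P, isUnit_of_invertible P, ?_, ?_⟩
  · rwa [b.toMatrix_basisFun_mul_mul_inv]
  · rwa [b.toMatrix_basisFun_mul_mul_inv]

/-- Let `k` be an algebraically closed field of characteristic zero and `X`,
`Y` be `n × n` matrices over `k` with `X*Y - Y*X = Y^2`.  Then `X` and `Y` can be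
simultaneously triangularized: there is an invertible matrix `P` such that `P*X*P⁻¹` and
`P*Y*P⁻¹` are both upper triangular (all entries strictly below the diagonal vanish). -/
theorem jordanian_simultaneous_triangularization
    (k : Type*) [Field k] [IsAlgClosed k] [CharZero k]
    (n : ℕ) (hn : 1 ≤ n) (X Y : Matrix (Fin n) (Fin n) k)
    (h : X * Y - Y * X = Y ^ 2) :
    ∃ P : Matrix (Fin n) (Fin n) k, IsUnit P ∧
      (P * X * P⁻¹).BlockTriangular id ∧ (P * Y * P⁻¹).BlockTriangular id :=
  jordanian_simultaneous_triangularization_general k n X Y h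
end
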